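/- Let D be a division ring and R a maximal subring of D, and let β ∈ R be a nonzero non-unit of R with βR = Rβ. Then the intersection ⋂_{n≥1} Rβⁿ equals {0}. -/
import Mathlib


theorem stmt_19 (D : Type*) [DivisionRing D]
    (R : Subring D) (hR : R ≠ ⊤) (hmax : ∀ S : Subring D, R < S → S = ⊤)
    (β : D) (hβR : β ∈ R) (hβ0 : β ≠ 0)
    (hβnu : ¬∃ b ∈ R, β * b = 1 ∧ b * β = 1)
    (hcomm : (fun r => β * r) '' (R : Set D) = (fun r => r * β) '' (R : Set D)) :
    (⋂ n : ℕ, {x : D | ∃ r ∈ R, x = r * β ^ (n + 1)}) = {0} := by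
  set γ : D := β⁻¹ with hγ
  have hβγ : β * γ = 1 := mul_inv_cancel₀ hβ0
  have hγβ : γ * β = 1 := inv_mul_cancel₀ hβ0
  have hβγk : ∀ k : ℕ, β ^ k * γ ^ k = 1 := fun k => by
    rw [hγ, inv_pow, mul_inv_cancel₀ (pow_ne_zero k hβ0)]
  have hγβk : ∀ k : ℕ, γ ^ k * β ^ k = 1 := fun k => by
    rw [hγ, inv_pow, inv_mul_cancel₀ (pow_ne_zero k hβ0)]
  -- from hcomm: conjugation
  have hconj1 : ∀ s ∈ R, γ * s * β ∈ R := by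
    intro s hs
    have : s * β ∈ (fun r => β * r) '' (R : Set D) := by
      rw [hcomm]; exact ⟨s, hs, rfl⟩
    obtain ⟨t, ht, htt⟩ := this
    have : γ * s * β = t := by
      rw [mul_assoc, ← htt, ← mul_assoc, hγβ, one_mul]
    rw [this]; exact ht
  have hconj : ∀ (m : ℕ), ∀ s ∈ R, γ ^ m * s * β ^ m ∈ R := by
    intro m
    induction m with
    | zero => intro s hs; simpa using hs
    | succ n ih =>
      intro s hs
      have key : γ ^ (n + 1) * s * β ^ (n + 1) = γ * (γ ^ n * s * β ^ n) * β := by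
        rw [pow_succ' γ, pow_succ β]; noncomm_ring
      rw [key]
      exact hconj1 _ (ih s hs)
  -- the subring U = ⋃ n, R γ^n
  set S : Set D := {x : D | ∃ n : ℕ, ∃ r ∈ R, x = r * γ ^ n} with hS
  have hone : (1 : D) ∈ S := ⟨0, 1, R.one_mem, by simp⟩
  have hzero : (0 : D) ∈ S := ⟨0, 0, R.zero_mem, by simp⟩
  have hRle : ∀ r ∈ R, r ∈ S := fun r hr => ⟨0, r, hr, by simp⟩
  have hγm : ∀ m n : ℕ, m ≤ n → γ ^ m = β ^ (n - m) * γ ^ n := by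
    intro m n hmn
    have h1 : γ ^ n = γ ^ (n - m) * γ ^ m := by rw [← pow_add, Nat.sub_add_cancel hmn]
    rw [h1, ← mul_assoc, hβγk, one_mul]
  have haddS : ∀ a b : D, a ∈ S → b ∈ S → a + b ∈ S := by
    rintro a b ⟨m, r, hr, rfl⟩ ⟨n, s, hs, rfl⟩
    rcases le_total m n with h | h
    · refine ⟨n, r * β ^ (n - m) + s, R.add_mem (R.mul_mem hr (R.pow_mem hβR _)) hs, ?_⟩
      rw [hγm m n h]; noncomm_ring
    · refine ⟨m, r + s * β ^ (m - n), R.add_mem hr (R.mul_mem hs (R.pow_mem hβR _)), ?_⟩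
      rw [hγm n m h]; noncomm_ring
  have hnegS : ∀ a : D, a ∈ S → -a ∈ S := by
    rintro a ⟨m, r, hr, rfl⟩
    exact ⟨m, -r, R.neg_mem hr, by noncomm_ring⟩
  have hmulS : ∀ a b : D, a ∈ S → b ∈ S → a * b ∈ S := by
    rintro a b ⟨m, r, hr, rfl⟩ ⟨n, s, hs, rfl⟩
    refine ⟨m + n, r * (γ ^ m * s * β ^ m), R.mul_mem hr (hconj m s hs), ?_⟩
    have h1 : γ ^ (m + n) = γ ^ m * γ ^ n := by rw [pow_add]
    have h2 : r * γ ^ m * (s * γ ^ n) = r * (γ ^ m * s * (β ^ m * γ ^ m)) * γ ^ n := by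
      rw [hβγk]; noncomm_ring
    rw [h2, h1]; noncomm_ring
  let U : Subring D :=
  { carrier := S
    one_mem' := hone
    zero_mem' := hzero
    add_mem' := fun {a b} ha hb => haddS a b ha hb
    neg_mem' := fun {a} ha => hnegS a ha
    mul_mem' := fun {a b} ha hb => hmulS a b ha hb }
  have hmemU : ∀ x : D, x ∈ U ↔ x ∈ S := fun x => Iff.rfl
  have hγU : γ ∈ U := ⟨1, 1, R.one_mem, by simp⟩
  have hγR : γ ∉ R := by
    intro hγR
    exact hβnu ⟨γ, hγR, hβγ, hγβ⟩
  have hRU : R < U := by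
    refine lt_of_le_of_ne (fun r hr => hRle r hr) ?_
    intro h
    exact hγR (h ▸ hγU)
  have hUtop : U = ⊤ := hmax U hRU
  -- now the main statement
  ext x
  simp only [Set.mem_iInter, Set.mem_setOf_eq, Set.mem_singleton_iff]
  constructor
  · intro hx
    by_contra hx0
    have hxinv : x⁻¹ ∈ U := by rw [hUtop]; exact Subring.mem_top _
    obtain ⟨n, r, hr, hre⟩ := hxinv
    obtain ⟨s, hs, hse⟩ := hx n
    have h1 : (1 : D) = x⁻¹ * x := (inv_mul_cancel₀ hx0).symm
    have hb : (1 : D) = (r * (γ ^ n * s * β ^ n)) * β := by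
      rw [h1, hre, hse, pow_succ]
      noncomm_ring
    set b : D := r * (γ ^ n * s * β ^ n) with hbdef
    have hbR : b ∈ R := R.mul_mem hr (hconj n s hs)
    have hbβ : b * β = 1 := hb.symm
    have hβb : β * b = 1 := by
      have : b = β⁻¹ := eq_inv_of_mul_eq_one_left hbβ
      rw [this, mul_inv_cancel₀ hβ0]
    exact hβnu ⟨b, hbR, hβb, hbβ⟩
  · rintro rfl
    intro n
    exact ⟨0, R.zero_mem, by simp⟩
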